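/- arXiv:1612.08357 — 6 statements merged into one kernel-verified Lean document; each statement's English description precedes it below -/
import Mathlib

section
/- Suppose $2 \in J(R)$. If $1 - e \in \chi(1 - a)$ or $1 - e \in \chi(1 + a)$ for an idempotent $e$ of a ring $R$, then $e \in \chi(a)$. -/
/- Up to sign, each of (1 - a) ∓ (1 - e) and (1 + a) ∓ (1 - e) differs from a - e or a + e by
0 or ±2. Since 2 ∈ J(R), and a unit plus an element of J(R) is again a unit, units go to units. -/

/-- The set χ(a) of idempotents e with a - e or a + e a unit. -/
def chi {R : Type u} [Ring R] (a : R) : Set R :=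
  {e | e * e = e ∧ (IsUnit (a - e) ∨ IsUnit (a + e))}

namespace Ideal

variable {R : Type u} [Ring R]

theorem isUnit_one_add_of_mem_jacobson_bot {j : R} (hj : j ∈ jacobson (⊥ : Ideal R)) :
    IsUnit (1 + j) := by
  have left_inv_of_mem {x : R} (hx : x ∈ jacobson (⊥ : Ideal R)) : ∃ z, z * (1 + x) = 1 := by
    obtain ⟨z, hz⟩ := mem_jacobson_iff.1 hx 1
    refine ⟨z, ?_⟩
    rw [mem_bot, mul_one, sub_eq_zero] at hz
    rw [mul_one_add, add_comm, hz]
  obtain ⟨z, hz⟩ := left_inv_of_mem hj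
  -- `z = 1 - z * j` also has a left inverse, so `z` is a unit with inverse `1 + j`.
  obtain ⟨w, hw⟩ := left_inv_of_mem (neg_mem (mul_mem_left _ z hj))
  have hwz : w * z = 1 := by
    have hz' : 1 - z * j = z := by rw [sub_eq_iff_eq_add, ← mul_one_add, hz]
    rwa [← sub_eq_add_neg, hz'] at hw
  have hzj : (1 + j) * z = 1 := by rw [← left_inv_eq_right_inv hwz hz, hwz]
  exact ⟨⟨1 + j, z, hzj, hz⟩, rfl⟩

theorem _root_.IsUnit.add_mem_jacobson_bot {u j : R} (hu : IsUnit u)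
    (hj : j ∈ jacobson (⊥ : Ideal R)) : IsUnit (u + j) := by
  obtain ⟨v, rfl⟩ := hu
  have hfactor : (v : R) + j = v * (1 + ↑v⁻¹ * j) := by
    rw [mul_one_add, Units.mul_inv_cancel_left]
  rw [hfactor]
  exact v.isUnit.mul (isUnit_one_add_of_mem_jacobson_bot (mul_mem_left _ _ hj))

end Ideal

theorem stmt_4 {R : Type u} [Ring R] (h2 : (2 : R) ∈ Ideal.jacobson (⊥ : Ideal R))
    (a e : R) (he : e * e = e)
    (h : (1 - e) ∈ chi (1 - a) ∨ (1 - e) ∈ chi (1 + a)) : e ∈ chi a := by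
  refine ⟨he, ?_⟩
  rcases h with ⟨-, hu | hu⟩ | ⟨-, hu | hu⟩
  · left
    convert hu.neg using 1
    abel
  · right
    convert hu.neg.add_mem_jacobson_bot h2 using 1
    rw [← one_add_one_eq_two]
    abel
  · right
    convert hu using 1
    abel
  · left
    convert hu.add_mem_jacobson_bot (neg_mem h2) using 1
    rw [← one_add_one_eq_two]
    abel
end

section
/- Let $R$ be a ring and suppose for every nonzero idempotent $e$ of $R$, $e$ is not the sum of two units, and $R$ is abelian (all idempotents are central). Then for every $a \in R$, $|\chi(a)| \le 1$; i.e., $win(R) = 1$. -/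
/-- The weak clean index of a ring. -/
noncomputable def win (R : Type u) [Ring R] : Cardinal :=
  ⨆ a : R, Cardinal.mk (chi a)

section

variable {R : Type*} [Ring R] {g : R}

lemma mul_add_one_sub_mul_mul_add_one_sub (hg : g ∈ Set.center R) (hgg : IsIdempotentElem g)
    (x y : R) : (x * g + (1 - g)) * (y * g + (1 - g)) = x * y * g + (1 - g) := by
  have hc : Commute g y := (Set.mem_center_iff.1 hg).comm y
  calc (x * g + (1 - g)) * (y * g + (1 - g))
      = x * (g * y) * g + x * (g * (1 - g)) + (1 - g) * y * g + (1 - g) * (1 - g) := by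
        noncomm_ring
    _ = x * y * g + (1 - g) := by
        rw [hc.eq, ((Commute.one_left y).sub_left hc).eq]
        simp only [mul_assoc, hgg.eq, hgg.mul_one_sub_self, hgg.one_sub_mul_self,
          hgg.one_sub.eq, mul_zero, add_zero]

lemma IsUnit.mul_add_one_sub {u : R} (hu : IsUnit u) (hg : g ∈ Set.center R)
    (hgg : IsIdempotentElem g) : IsUnit (u * g + (1 - g)) := by
  obtain ⟨u, rfl⟩ := hu
  refine ⟨⟨_, ↑u⁻¹ * g + (1 - g), ?_, ?_⟩, rfl⟩ <;>
    simp [mul_add_one_sub_mul_mul_add_one_sub hg hgg]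

lemma exists_isUnit_add_eq_of_mul_eq_mul_add (hg : g ∈ Set.center R)
    (hgg : IsIdempotentElem g) {u w : R} (hu : IsUnit u) (hw : IsUnit w)
    (h : u * g = w * g + g) : ∃ u v : R, IsUnit u ∧ IsUnit v ∧ g = u + v := by
  refine ⟨u * g + (1 - g), -(w * g + (1 - g)), hu.mul_add_one_sub hg hgg,
    (hw.mul_add_one_sub hg hgg).neg, ?_⟩
  rw [h]
  abel

lemma mul_one_sub_eq_zero_of_mem_chi (habel : ∀ e : R, e * e = e → e ∈ Set.center R)
    (hsum : ∀ e : R, e * e = e → e ≠ 0 → ¬∃ u v : R, IsUnit u ∧ IsUnit v ∧ e = u + v)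
    {a e f : R} (he : e ∈ chi a) (hf : f ∈ chi a) :
    e * (1 - f) = 0 := by
  obtain ⟨hee, hae⟩ := he
  obtain ⟨hff, haf⟩ := hf
  have hec : e ∈ Subring.center R := habel e hee
  have hfc : f ∈ Subring.center R := habel f hff
  set g := e * (1 - f)
  have hg : g ∈ Subring.center R := mul_mem hec (sub_mem (one_mem _) hfc)
  have hgg : IsIdempotentElem g :=
    .mul_of_commute (Subring.mem_center_iff.1 hec _).symm hee (IsIdempotentElem.one_sub hff)
  have heg : e * g = g := by rw [← mul_assoc, hee]
  have hfg : f * g = 0 := by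
    rw [← mul_assoc, (Subring.mem_center_iff.1 hfc e).symm, mul_assoc,
      IsIdempotentElem.mul_one_sub_self hff, mul_zero]
  obtain ⟨w, hw, hwg⟩ : ∃ w, IsUnit w ∧ w * g = a * g := by
    rcases haf with h | h
    · exact ⟨_, h, by rw [sub_mul, hfg, sub_zero]⟩
    · exact ⟨_, h, by rw [add_mul, hfg, add_zero]⟩
  by_contra hne
  refine hsum g hgg hne ?_
  rcases hae with h | h
  · exact exists_isUnit_add_eq_of_mul_eq_mul_add hg hgg hw h
      (by rw [hwg, sub_mul, heg, sub_add_cancel])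
  · exact exists_isUnit_add_eq_of_mul_eq_mul_add hg hgg h hw (by rw [hwg, add_mul, heg])

lemma chi_subsingleton (habel : ∀ e : R, e * e = e → e ∈ Set.center R)
    (hsum : ∀ e : R, e * e = e → e ≠ 0 → ¬∃ u v : R, IsUnit u ∧ IsUnit v ∧ e = u + v)
    (a : R) : (chi a).Subsingleton := by
  intro e he f hf
  have hef : e = e * f := sub_eq_zero.1 <| (mul_one_sub e f).symm.trans <|
    mul_one_sub_eq_zero_of_mem_chi habel hsum he hf
  have hfe : f = f * e := sub_eq_zero.1 <| (mul_one_sub f e).symm.trans <|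
    mul_one_sub_eq_zero_of_mem_chi habel hsum hf he
  calc e = e * f := hef
    _ = f * e := ((habel e he.1).comm f).eq
    _ = f := hfe.symm

lemma zero_mem_chi_one : (0 : R) ∈ chi 1 :=
  ⟨mul_zero 0, .inl (by simp)⟩

end

theorem stmt_10 {R : Type u} [Ring R]
    (habel : ∀ e : R, e * e = e → e ∈ Set.center R)
    (hsum : ∀ e : R, e * e = e → e ≠ 0 → ¬∃ u v : R, IsUnit u ∧ IsUnit v ∧ e = u + v) :
    (∀ a : R, Cardinal.mk (chi a) ≤ 1) ∧ win R = 1 := by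
  have hle : ∀ a : R, Cardinal.mk (chi a) ≤ 1 := fun a =>
    Cardinal.mk_le_one_iff_set_subsingleton.2 (chi_subsingleton habel hsum a)
  refine ⟨hle, le_antisymm (ciSup_le' hle) ?_⟩
  have hone : 1 ≤ Cardinal.mk (chi (1 : R)) :=
    Cardinal.one_le_iff_ne_zero.2 (Cardinal.mk_ne_zero_iff.2 ⟨⟨0, zero_mem_chi_one⟩⟩)
  exact le_ciSup_of_le ⟨1, Set.forall_mem_range.2 hle⟩ 1 hone
end

section
/- If $win(R) = 1$ (i.e., $|\chi(a)| \le 1$ for all $a \in R$), then $R$ is abelian: every idempotent of $R$ is central. -/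
theorem chi_subsingleton_of_win_le_one {R : Type u} [Ring R] (h : win R ≤ 1) (a : R) :
    (chi a).Subsingleton :=
  Cardinal.mk_le_one_iff_set_subsingleton.mp <| (le_ciSup Cardinal.bddAbove_of_small a).trans h

namespace IsIdempotentElem

theorem add_of_mul_self_eq_zero {R : Type*} [NonUnitalNonAssocSemiring R] {e u : R}
    (he : IsIdempotentElem e) (hu : u * u = 0) (heu : e * u + u * e = u) :
    IsIdempotentElem (e + u) := by
  rw [IsIdempotentElem, add_mul, mul_add, mul_add, he.eq, hu, add_zero, add_assoc, heu]

variable {R : Type*} [Ring R] {e : R}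

theorem peirce_mul_self_eq_zero (he : IsIdempotentElem e) (x : R) :
    e * x * (1 - e) * (e * x * (1 - e)) = 0 := by
  calc e * x * (1 - e) * (e * x * (1 - e)) = e * x * ((1 - e) * e) * x * (1 - e) := by
        noncomm_ring
    _ = 0 := by rw [he.one_sub_mul_self, mul_zero, zero_mul, zero_mul]

theorem mul_peirce_add_peirce_mul (he : IsIdempotentElem e) (x : R) :
    e * (e * x * (1 - e)) + e * x * (1 - e) * e = e * x * (1 - e) := by
  rw [← mul_assoc, ← mul_assoc, he.eq, mul_assoc _ (1 - e), he.one_sub_mul_self, mul_zero,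
    add_zero]

theorem mul_comm_of_peirce_eq_zero (x : R) (h₁ : e * x * (1 - e) = 0)
    (h₂ : (1 - e) * x * e = 0) : e * x = x * e := by
  rw [← sub_eq_zero]
  calc e * x - x * e = e * x * (1 - e) - (1 - e) * x * e := by noncomm_ring
    _ = 0 := by rw [h₁, h₂, sub_zero]

end IsIdempotentElem

theorem eq_zero_of_chi_one_add_subsingleton {R : Type u} [Ring R] {e u : R}
    (hχ : (chi (1 + e)).Subsingleton) (he : IsIdempotentElem e) (hu : u * u = 0)
    (heu : e * u + u * e = u) : u = 0 := by
  have he_mem : e ∈ chi (1 + e) := ⟨he, Or.inl (by simp)⟩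
  have heu_mem : e + u ∈ chi (1 + e) := by
    refine ⟨he.add_of_mul_self_eq_zero hu heu, Or.inl ?_⟩
    rw [show 1 + e - (e + u) = 1 - u by abel]
    exact IsNilpotent.isUnit_one_sub ⟨2, by rw [sq, hu]⟩
  exact add_eq_left.mp (hχ heu_mem he_mem)

theorem stmt_11 {R : Type u} [Ring R] (h : win R = 1) :
    ∀ e : R, e * e = e → e ∈ Set.center R := by
  intro e he
  have peirce_eq_zero (f : R) (hf : IsIdempotentElem f) (x : R) : f * x * (1 - f) = 0 :=
    eq_zero_of_chi_one_add_subsingleton (chi_subsingleton_of_win_le_one h.le _) hf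
      (hf.peirce_mul_self_eq_zero x) (hf.mul_peirce_add_peirce_mul x)
  refine Semigroup.mem_center_iff.mpr fun x => (IsIdempotentElem.mul_comm_of_peirce_eq_zero x
    (peirce_eq_zero e he x) ?_).symm
  simpa only [sub_sub_cancel] using peirce_eq_zero (1 - e) (IsIdempotentElem.one_sub he) x
end

section
/- If $win(R) = 1$, then no nonzero idempotent of $R$ can be written as the sum of two units. -/
section
variable {R : Type u} [Ring R]

theorem zero_mem_chi {a : R} (ha : IsUnit a) : (0 : R) ∈ chi a :=
  ⟨mul_zero 0, .inl (by rwa [sub_zero])⟩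

theorem mem_chi_of_eq_add {a e v : R} (he : e * e = e) (hv : IsUnit v) (hav : e = a + v) :
    e ∈ chi a :=
  ⟨he, .inl (by rw [show a - e = -v by rw [hav]; abel]; exact hv.neg)⟩

theorem mk_chi_le_win (a : R) : Cardinal.mk (chi a) ≤ win R :=
  le_ciSup Cardinal.bddAbove_of_small a

theorem one_lt_win_of_chi_nontrivial {a : R} (h : (chi a).Nontrivial) : 1 < win R :=
  (Cardinal.one_lt_iff_nontrivial.mpr h.coe_sort).trans_le (mk_chi_le_win a)

end

theorem stmt_12 {R : Type u} [Ring R] (h : win R = 1) :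
    ∀ e : R, e * e = e → e ≠ 0 → ¬∃ u v : R, IsUnit u ∧ IsUnit v ∧ e = u + v := by
  rintro e he hne ⟨u, v, hu, hv, rfl⟩
  have hchi : (chi u).Nontrivial := ⟨_, mem_chi_of_eq_add he hv rfl, 0, zero_mem_chi hu, hne⟩
  exact (one_lt_win_of_chi_nontrivial hchi).ne' h
end

section
/- If $R$ is not abelian (has a non-central idempotent), then the polynomial ring $R[x]$ has infinite weak clean index: there exists $a \in R[x]$ with $\chi(a)$ infinite. -/
/-!
If `e` is an idempotent and `f` is a square-zero element with `e f + f e = f`, then `e + f`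
is again idempotent, and `(1 - e) + (e + f) = 1 + f` is a unit; so `e + f ∈ χ(1 - e)`.
A non-central idempotent `e` yields such an `f ≠ 0`, namely `e r (1 - e)` or `(1 - e) r e`,
and in `R[X]` every `f Xⁿ` works as well, which gives infinitely many elements of `χ(1 - e)`.
-/

section

variable {S : Type*} [Ring S] {e f : S}

theorem IsIdempotentElem.add_of_mul_add_mul (he : IsIdempotentElem e) (hff : f * f = 0)
    (hef : e * f + f * e = f) : IsIdempotentElem (e + f) := by
  unfold IsIdempotentElem at he ⊢
  calc (e + f) * (e + f) = e * e + (e * f + f * e) + f * f := by noncomm_ring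
    _ = e + f := by rw [he, hef, hff, add_zero]

theorem add_mem_chi_one_sub (he : IsIdempotentElem e) (hff : f * f = 0)
    (hef : e * f + f * e = f) : e + f ∈ chi (1 - e) := by
  refine ⟨he.add_of_mul_add_mul hff hef, Or.inr ?_⟩
  rw [show 1 - e + (e + f) = 1 + f by abel]
  exact IsNilpotent.isUnit_one_add ⟨2, by rw [pow_two, hff]⟩

theorem IsIdempotentElem.exists_sq_eq_zero_of_notMem_center (he : IsIdempotentElem e)
    (hnc : e ∉ Set.center S) : ∃ f : S, f ≠ 0 ∧ f * f = 0 ∧ e * f + f * e = f := by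
  have h₁ := he.mul_one_sub_self
  have h₂ := he.one_sub_mul_self
  unfold IsIdempotentElem at he
  obtain ⟨r, hr⟩ : ∃ r, r * e ≠ e * r := by
    simpa [Semigroup.mem_center_iff] using hnc
  by_cases hright : e * r * (1 - e) = 0
  · refine ⟨(1 - e) * r * e, fun hleft ↦ hr ?_, ?_, ?_⟩
    · have hre : r * e = e * r * e := by
        rw [← sub_eq_zero, ← hleft]; noncomm_ring
      have her : e * r = e * r * e := by
        rw [← sub_eq_zero, ← hright]; noncomm_ring
      rw [hre, ← her]
    · calc (1 - e) * r * e * ((1 - e) * r * e) = (1 - e) * r * (e * (1 - e)) * r * e := by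
            noncomm_ring
        _ = 0 := by rw [h₁]; noncomm_ring
    · calc e * ((1 - e) * r * e) + (1 - e) * r * e * e
            = e * (1 - e) * r * e + (1 - e) * r * (e * e) := by noncomm_ring
        _ = (1 - e) * r * e := by rw [h₁, he]; noncomm_ring
  · refine ⟨e * r * (1 - e), hright, ?_, ?_⟩
    · calc e * r * (1 - e) * (e * r * (1 - e)) = e * r * ((1 - e) * e) * r * (1 - e) := by
            noncomm_ring
        _ = 0 := by rw [h₂]; noncomm_ring
    · calc e * (e * r * (1 - e)) + e * r * (1 - e) * e
            = (e * e) * r * (1 - e) + e * r * ((1 - e) * e) := by noncomm_ring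
        _ = e * r * (1 - e) := by rw [h₂, he]; noncomm_ring

end

open Polynomial in
theorem Polynomial.chi_one_sub_C_infinite {R : Type*} [Ring R] {e f : R}
    (he : IsIdempotentElem e) (hf : f ≠ 0) (hff : f * f = 0) (hef : e * f + f * e = f) :
    (chi (1 - C e)).Infinite := by
  refine Set.infinite_of_injective_forall_mem (f := fun n ↦ C e + monomial n f)
    ((add_right_injective (C e)).comp fun n m h ↦ (monomial_left_inj hf).mp h) fun n ↦ ?_
  refine add_mem_chi_one_sub (he.map C) ?_ ?_
  · rw [monomial_mul_monomial, hff, monomial_zero_right]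
  · rw [C_mul_monomial, monomial_mul_C, ← map_add, hef]

theorem stmt_13 {R : Type u} [Ring R] (e : R) (he : e * e = e)
    (hnc : e ∉ Set.center R) :
    ∃ a : Polynomial R, (chi a).Infinite := by
  obtain ⟨f, hf, hff, hef⟩ := IsIdempotentElem.exists_sq_eq_zero_of_notMem_center he hnc
  exact ⟨_, Polynomial.chi_one_sub_C_infinite he hf hff hef⟩
end

section
/- If $R$ is abelian, then for any power series $\alpha = a_0 + a_1 x + \cdots \in R[[x]]$, we have $\chi_{R[[x]]}(\alpha) \subseteq \chi_R(a_0)$ (identifying idempotents of $R[[x]]$, which all lie in $R$, with elements of $R$); hence $win(R[[x]]) \le win(R)$. -/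
/-!
An idempotent `ε` of `R⟦X⟧` whose constant coefficient `e` is central commutes with `C e`, and
for commuting idempotents `d := ε - C e` satisfies `d ^ 3 = d`. Since `d` has zero constant
coefficient, `1 - d ^ 2` is a unit, so `d = 0`: every idempotent of `R⟦X⟧` is a constant. Hence
`constantCoeff` maps `χ(α)` injectively into `χ(α(0))`, which bounds `win R⟦X⟧` by `win R`.
-/

open PowerSeries

section Idempotent

variable {R : Type*} [Ring R] {p q : R}

theorem IsIdempotentElem.sub_pow_three_of_commute (hp : IsIdempotentElem p)
    (hq : IsIdempotentElem q) (hpq : Commute p q) : (p - q) ^ 3 = p - q := by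
  simp only [pow_succ, pow_zero, mul_sub, one_mul, sub_mul, hp.eq, hq.eq, hpq.eq, mul_assoc]
  simp only [← mul_assoc, hq.eq]
  abel

theorem IsIdempotentElem.eq_of_commute_of_isUnit (hp : IsIdempotentElem p)
    (hq : IsIdempotentElem q) (hpq : Commute p q) (hu : IsUnit (1 - (p - q) ^ 2)) : p = q := by
  have hzero : (p - q) * (1 - (p - q) ^ 2) = 0 := by
    rw [mul_sub, mul_one, ← pow_succ', hp.sub_pow_three_of_commute hq hpq, sub_self]
  exact sub_eq_zero.mp (hu.mul_left_eq_zero.mp hzero)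

end Idempotent

namespace PowerSeries

variable {R : Type*} [Ring R]

theorem commute_C_of_mem_center (φ : R⟦X⟧) {r : R} (hr : r ∈ Set.center R) :
    Commute φ (C r) := by
  ext n
  rw [coeff_mul_C, coeff_C_mul, (Set.mem_center_iff.mp hr).comm]

theorem eq_C_constantCoeff_of_isIdempotentElem {ε : R⟦X⟧} (hε : IsIdempotentElem ε)
    (hc : constantCoeff ε ∈ Set.center R) : ε = C (constantCoeff ε) := by
  refine hε.eq_of_commute_of_isUnit ((hε.map constantCoeff).map C)
    (ε.commute_C_of_mem_center hc) ?_
  rw [isUnit_iff_constantCoeff]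
  simp

end PowerSeries

theorem map_mem_chi {R S : Type*} [Ring R] [Ring S] (f : R →+* S) {a e : R} (he : e ∈ chi a) :
    f e ∈ chi (f a) := by
  obtain ⟨hidem, hu | hu⟩ := he
  · exact ⟨by rw [← map_mul, hidem], .inl (by simpa using hu.map f)⟩
  · exact ⟨by rw [← map_mul, hidem], .inr (by simpa using hu.map f)⟩

theorem win_le_win_of_injOn_chi {R S : Type u} [Ring R] [Ring S] (f : R →+* S)
    (hf : ∀ a : R, Set.InjOn f (chi a)) : win R ≤ win S := by
  refine ciSup_le' fun a => ?_
  calc Cardinal.mk (chi a) = Cardinal.mk (f '' chi a) :=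
        (Cardinal.mk_image_eq_of_injOn f _ (hf a)).symm
    _ ≤ Cardinal.mk (chi (f a)) :=
        Cardinal.mk_le_mk_of_subset (Set.image_subset_iff.mpr fun _ he => map_mem_chi f he)
    _ ≤ win S := le_ciSup Cardinal.bddAbove_of_small (f a)

theorem stmt_14 {R : Type u} [Ring R]
    (habel : ∀ e : R, e * e = e → e ∈ Set.center R) :
    (∀ α : PowerSeries R, ∀ ε ∈ chi α, ∃ e : R,
        ε = PowerSeries.C e ∧ e ∈ chi (PowerSeries.constantCoeff α)) ∧
      win (PowerSeries R) ≤ win R := by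
  have hconst : ∀ ε : R⟦X⟧, IsIdempotentElem ε → ε = C (constantCoeff ε) := fun ε hε =>
    eq_C_constantCoeff_of_isIdempotentElem hε (habel _ (hε.map constantCoeff).eq)
  refine ⟨fun α ε hε => ⟨_, hconst ε hε.1, map_mem_chi constantCoeff hε⟩,
    win_le_win_of_injOn_chi constantCoeff fun α ε₁ hε₁ ε₂ hε₂ h => ?_⟩
  rw [hconst ε₁ hε₁.1, hconst ε₂ hε₂.1, h]
end
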